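/- arXiv:1912.05179 — 2 statements merged into one kernel-verified Lean document; each statement's English description precedes it below -/
import Mathlib

section
/- Let A be an m×n real matrix of rank r. Suppose I is a list of r distinct row indices and J is a list of r distinct column indices such that the r×r submatrix Â = A(I,J) is invertible. Then A admits the cross (skeleton) decomposition A = C Â⁻¹ R, where C = A(:,J) is the m×r matrix of the columns of A indexed by J and R = A(I,:) is the r×n matrix of the rows of A indexed by I. -/
/-!
The columns `C = A(:, J)` lie in the column space of `A`, and their rank is at least that of
`Â = A(I, J)`, which is `r = rank A`; so they span it, and `A = C * W` for some `W`.
Restricting to the rows `I` gives `R = Â * W`, hence `C * Â⁻¹ * R = C * W = A`.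
-/

namespace Matrix

variable {m n k : Type*} [Fintype n] [Fintype k]

section CommSemiring

variable {R : Type*} [CommSemiring R]

theorem exists_eq_mul_of_range_mulVecLin_le [DecidableEq n] {A : Matrix m n R}
    {C : Matrix m k R} (h : LinearMap.range A.mulVecLin ≤ LinearMap.range C.mulVecLin) :
    ∃ W : Matrix k n R, A = C * W := by
  have hcol (t : n) : ∃ x, C *ᵥ x = A.col t :=
    h ⟨Pi.single t 1, mulVec_single_one A t⟩
  choose X hX using hcol
  refine ⟨(of X)ᵀ, ext fun s t => ?_⟩
  rw [← col_apply A t s, ← hX t]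
  rfl

theorem range_mulVecLin_submatrix_id_le (A : Matrix m n R) (j : k → n) :
    LinearMap.range (A.submatrix id j).mulVecLin ≤ LinearMap.range A.mulVecLin := by
  classical
  have hcols : A.submatrix id j = A * (1 : Matrix n n R).submatrix id j := by
    simpa using (mul_submatrix_one (Equiv.refl n) j A).symm
  rw [hcols, mulVecLin_mul]
  exact LinearMap.range_comp_le_range _ _

end CommSemiring

variable {K : Type*} [Field K]

theorem range_mulVecLin_submatrix_id_eq {l : Type*} [Fintype l] (A : Matrix m n K)
    (i : l → m) (j : k → n) (hrank : A.rank ≤ (A.submatrix i j).rank) :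
    LinearMap.range (A.submatrix id j).mulVecLin = LinearMap.range A.mulVecLin := by
  refine Submodule.eq_of_le_of_finrank_le (range_mulVecLin_submatrix_id_le A j) ?_
  calc A.rank ≤ (A.submatrix i j).rank := hrank
    _ = ((A.submatrix id j).submatrix i id).rank := rfl
    _ ≤ (A.submatrix id j).rank := rank_submatrix_le _ _ _

theorem eq_submatrix_mul_inv_mul_submatrix [DecidableEq k] (A : Matrix m n K)
    (i : k → m) (j : k → n) (hinv : IsUnit (A.submatrix i j))
    (hrank : A.rank ≤ (A.submatrix i j).rank) :
    A = A.submatrix id j * (A.submatrix i j)⁻¹ * A.submatrix i id := by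
  classical
  obtain ⟨W, hW⟩ := exists_eq_mul_of_range_mulVecLin_le
    (range_mulVecLin_submatrix_id_eq A i j hrank).ge
  have hrows : A.submatrix i id = A.submatrix i j * W := by
    conv_lhs => rw [hW]
    rw [submatrix_mul _ _ i id id Function.bijective_id, submatrix_id_id]
    rfl
  have := hinv.invertible
  rw [hrows, Matrix.mul_assoc, inv_mul_cancel_left_of_invertible, ← hW]

end Matrix

theorem cross_decomposition_general {m n r : ℕ} (A : Matrix (Fin m) (Fin n) ℝ)
    (hrank : A.rank = r)
    (i : Fin r → Fin m) (j : Fin r → Fin n)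
    (hinv : IsUnit (A.submatrix i j)) :
    A = A.submatrix id j * (A.submatrix i j)⁻¹ * A.submatrix i id :=
  A.eq_submatrix_mul_inv_mul_submatrix i j hinv <| by
    rw [Matrix.rank_of_isUnit _ hinv, hrank, Fintype.card_fin]

/-- **Cross (skeleton) decomposition.**
Let `A` be an `m × n` real matrix of rank `r`.  Suppose `i : Fin r → Fin m` and
`j : Fin r → Fin n` are injective selections of `r` row indices and `r` column
indices such that the `r × r` submatrix `Â = A(I, J) = A.submatrix i j` is
invertible.  Then `A = C * Â⁻¹ * R`, where `C = A(:, J) = A.submatrix id j`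
is the `m × r` matrix of the selected columns of `A` and
`R = A(I, :) = A.submatrix i id` is the `r × n` matrix of the selected rows. -/
theorem cross_decomposition {m n r : ℕ} (A : Matrix (Fin m) (Fin n) ℝ)
    (hrank : A.rank = r)
    (i : Fin r → Fin m) (j : Fin r → Fin n)
    (hi : Function.Injective i) (hj : Function.Injective j)
    (hinv : IsUnit (A.submatrix i j)) :
    A = A.submatrix id j * (A.submatrix i j)⁻¹ * A.submatrix i id :=
  cross_decomposition_general A hrank i j hinv
end

section
/- For any points x₁, …, x_N in ℝ^d and any σ > 0, the N×N matrix K with entries K_{ij} = exp(−‖x_i − x_j‖/σ), where ‖·‖ is the Euclidean norm on ℝ^d, is symmetric positive semidefinite. -/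
/-!
Gram matrices are positive semidefinite, hence so are their Hadamard powers (Schur product
theorem) and their entrywise exponentials, which are series of Hadamard powers with nonnegative
coefficients. Writing `exp (-b ‖x - y‖²) = exp (-b ‖x‖²) exp (2b ⟪x, y⟫) exp (-b ‖y‖²)`
exhibits the Gaussian kernel as a congruence of such an exponential. The exponential kernel is
a nonnegative mixture of Gaussian kernels,
  `exp (-r) = 2 / √π * ∫₀^∞ exp (-s²) exp (-r² / (4 s²)) ds`,
which follows from the Cauchy–Schlömilch substitution `s ↦ s - c / s`, and positive
semidefiniteness survives such mixtures.
-/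

open Real MeasureTheory Set

section CauchySchlomilch

variable {F : Type*} [NormedAddCommGroup F] [NormedSpace ℝ F] {c : ℝ}

theorem integral_Ioi_eq_integral_div_sq_smul_comp_div (hc : 0 < c) (f : ℝ → F) :
    ∫ s in Ioi 0, f s = ∫ s in Ioi 0, (c / s ^ 2) • f (c / s) := by
  have hderiv : ∀ s ∈ Ioi (0 : ℝ), HasDerivWithinAt (c / ·) (-(c / s ^ 2)) (Ioi 0) s :=
    fun s hs => ((hasDerivAt_const s c).div (hasDerivAt_id s) (ne_of_gt hs)).hasDerivWithinAt
      |>.congr_deriv (by simp [neg_div])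
  have hinj : InjOn (c / ·) (Ioi (0 : ℝ)) := fun a _ b _ h => by
    simpa [div_eq_mul_inv, hc.ne'] using h
  have himage : (c / ·) '' Ioi (0 : ℝ) = Ioi 0 := by
    refine (Set.image_subset_iff.2 fun s hs => div_pos hc hs).antisymm fun t ht => ?_
    exact ⟨c / t, div_pos hc ht, div_div_cancel₀ hc.ne'⟩
  conv_lhs =>
    rw [← himage, integral_image_eq_integral_abs_deriv_smul measurableSet_Ioi hderiv hinj]
  refine setIntegral_congr_fun measurableSet_Ioi fun s hs => ?_
  rw [abs_neg, abs_of_pos (div_pos hc (pow_pos hs 2))]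

theorem hasDerivAt_sub_div {s : ℝ} (hs : s ≠ 0) :
    HasDerivAt (fun s => s - c / s) (1 + c / s ^ 2) s :=
  ((hasDerivAt_id s).sub ((hasDerivAt_const s c).div (hasDerivAt_id s) hs)).congr_deriv
    (by simp; ring)

theorem strictMonoOn_sub_div (hc : 0 ≤ c) : StrictMonoOn (fun s => s - c / s) (Ioi 0) :=
  fun a ha b _ hab => by
    have := div_le_div_of_nonneg_left hc ha hab.le
    simp only; linarith

theorem image_sub_div_Ioi (hc : 0 < c) : (fun s => s - c / s) '' Ioi 0 = univ := by
  refine eq_univ_of_forall fun w => ?_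
  -- the positive root of `s ^ 2 - w s - c`
  have hdisc : 0 < w ^ 2 + 4 * c := by positivity
  set s := (w + √(w ^ 2 + 4 * c)) / 2
  have hs : 0 < s := by
    have : |w| < √(w ^ 2 + 4 * c) := by
      rw [← sqrt_sq_eq_abs]; exact sqrt_lt_sqrt (sq_nonneg w) (by linarith)
    have := neg_abs_le w
    simp only [s]; linarith
  refine ⟨s, hs, ?_⟩
  have hsq : √(w ^ 2 + 4 * c) ^ 2 = w ^ 2 + 4 * c := sq_sqrt hdisc.le
  field_simp
  simp only [s]
  linear_combination hsq / 4

theorem integral_eq_two_smul_integral_Ioi_comp_sub_div {g : ℝ → F} (hg : Integrable g)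
    (heven : Function.Even g) (hc : 0 < c) :
    ∫ w, g w = (2 : ℝ) • ∫ s in Ioi 0, g (s - c / s) := by
  set h := fun s => g (s - c / s)
  have hderiv : ∀ s ∈ Ioi (0 : ℝ),
      HasDerivWithinAt (fun s => s - c / s) (1 + c / s ^ 2) (Ioi 0) s :=
    fun s hs => (hasDerivAt_sub_div (ne_of_gt hs)).hasDerivWithinAt
  have hinj := (strictMonoOn_sub_div hc.le).injOn
  have hweight : ∀ s ∈ Ioi (0 : ℝ), |1 + c / s ^ 2| = 1 + c / s ^ 2 :=
    fun s hs => abs_of_pos (by have := hs.out; positivity)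
  have hweighted : IntegrableOn (fun s => (1 + c / s ^ 2) • h s) (Ioi 0) := by
    have := (integrableOn_image_iff_integrableOn_abs_deriv_smul measurableSet_Ioi hderiv hinj
      g).1 (by rw [image_sub_div_Ioi hc]; exact hg.integrableOn)
    exact this.congr_fun (fun s hs => by simp only [hweight s hs, h]) measurableSet_Ioi
  have hint : IntegrableOn h (Ioi 0) := by
    refine IntegrableOn.congr_fun (hweighted.bdd_smul 1 (φ := fun s => (1 + c / s ^ 2)⁻¹)
      (by fun_prop : Measurable _).aestronglyMeasurable ?_) (fun s hs => ?_) measurableSet_Ioi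
    · filter_upwards [ae_restrict_mem measurableSet_Ioi] with s hs
      have : 0 ≤ c / s ^ 2 := by have := hs.out; positivity
      rw [norm_inv, Real.norm_of_nonneg (by linarith)]
      exact inv_le_one_of_one_le₀ (by linarith)
    · have : 0 < 1 + c / s ^ 2 := by have := hs.out; positivity
      simp [smul_smul, inv_mul_cancel₀ this.ne']
  have hint' : IntegrableOn (fun s => (c / s ^ 2) • h s) (Ioi 0) :=
    (hweighted.sub hint).congr_fun (fun s _ => by simp [add_smul]) measurableSet_Ioi
  -- `s ↦ c / s` reverses the sign of `s - c / s`
  have hinv : ∫ s in Ioi 0, (c / s ^ 2) • h s = ∫ s in Ioi 0, h s := by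
    rw [integral_Ioi_eq_integral_div_sq_smul_comp_div hc h]
    refine setIntegral_congr_fun measurableSet_Ioi fun s hs => ?_
    have : c / s - c / (c / s) = -(s - c / s) := by
      rw [div_div_cancel₀ hc.ne']; ring
    simp only [h, this, heven (s - c / s)]
  calc ∫ w, g w = ∫ w in (fun s => s - c / s) '' Ioi 0, g w := by
        rw [image_sub_div_Ioi hc, Measure.restrict_univ]
    _ = ∫ s in Ioi 0, |1 + c / s ^ 2| • h s :=
        integral_image_eq_integral_abs_deriv_smul measurableSet_Ioi hderiv hinj g
    _ = ∫ s in Ioi 0, (h s + (c / s ^ 2) • h s) :=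
        setIntegral_congr_fun measurableSet_Ioi fun s hs => by
          rw [hweight s hs, add_smul, one_smul]
    _ = (2 : ℝ) • ∫ s in Ioi 0, h s := by rw [integral_add hint hint', hinv, two_smul]

theorem integral_Ioi_exp_neg_sq_sub_div (hc : 0 ≤ c) :
    ∫ s in Ioi 0, exp (-(s - c / s) ^ 2) = √π / 2 := by
  rcases hc.eq_or_lt with rfl | hc
  · simpa using integral_gaussian_Ioi 1
  have hgauss : ∫ w : ℝ, exp (-w ^ 2) = √π := by simpa using integral_gaussian 1
  have := integral_eq_two_smul_integral_Ioi_comp_sub_div (g := fun w => exp (-w ^ 2))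
    (by simpa using integrable_exp_neg_mul_sq one_pos) (fun w => by simp) hc
  rw [hgauss, smul_eq_mul] at this
  linarith

end CauchySchlomilch

theorem integrable_exp_neg_sq_mul_exp_neg_inv_mul {r : ℝ} :
    Integrable fun s : ℝ => exp (-s ^ 2) * exp (-((4 * s ^ 2)⁻¹ * r ^ 2)) := by
  have hgauss : Integrable fun s : ℝ => exp (-s ^ 2) := by
    simpa using integrable_exp_neg_mul_sq one_pos
  refine hgauss.mul_bdd (c := 1) (by fun_prop : Measurable _).aestronglyMeasurable
    (ae_of_all _ fun s => ?_)
  rw [norm_of_nonneg (exp_nonneg _), exp_le_one_iff, neg_nonpos]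
  positivity

theorem integral_Ioi_exp_neg_sq_mul_exp_neg_inv_mul {r : ℝ} (hr : 0 ≤ r) :
    ∫ s in Ioi 0, exp (-s ^ 2) * exp (-((4 * s ^ 2)⁻¹ * r ^ 2)) = √π / 2 * exp (-r) := by
  have hsq : ∀ s ∈ Ioi (0 : ℝ), exp (-s ^ 2) * exp (-((4 * s ^ 2)⁻¹ * r ^ 2)) =
      exp (-r) * exp (-(s - r / 2 / s) ^ 2) := fun s hs => by
    rw [← exp_add, ← exp_add]
    congr 1
    field_simp [hs.out.ne']
    ring
  rw [setIntegral_congr_fun measurableSet_Ioi hsq, integral_const_mul,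
    integral_Ioi_exp_neg_sq_sub_div (by positivity), mul_comm]

namespace Matrix

variable {ι : Type*}

theorem posSemidef_of_integral {α : Type*} [MeasurableSpace α] {μ : Measure α}
    {A : α → Matrix ι ι ℝ} (hA : ∀ᵐ t ∂μ, (A t).PosSemidef)
    (hint : ∀ i j, Integrable (fun t => A t i j) μ) :
    (of fun i j => ∫ t, A t i j ∂μ).PosSemidef := by
  refine ⟨?_, fun v => ?_⟩
  · ext i j
    exact integral_congr_ae (hA.mono fun t ht => by simpa using congr_fun₂ ht.1 i j)
  have hterm : ∀ i j a b, Integrable (fun t => a * A t i j * b) μ :=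
    fun i j a b => ((hint i j).const_mul a).mul_const b
  have hform :
      (v.sum fun i a => v.sum fun j b => star a * of (fun i j => ∫ t, A t i j ∂μ) i j * b) =
        ∫ t, v.sum fun i a => v.sum fun j b => star a * A t i j * b ∂μ := by
    simp only [Finsupp.sum, of_apply, star_trivial]
    rw [integral_finsetSum _ fun i _ => integrable_finsetSum _ fun j _ => hterm _ _ _ _]
    refine Finset.sum_congr rfl fun i _ => ?_
    rw [integral_finsetSum _ fun j _ => hterm _ _ _ _]
    refine Finset.sum_congr rfl fun j _ => ?_
    rw [integral_mul_const, integral_const_mul]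
  rw [hform]
  exact integral_nonneg_of_ae (hA.mono fun t ht => ht.2 v)

theorem posSemidef_of_tsum {β : Type*} {A : β → Matrix ι ι ℝ} (hA : ∀ n, (A n).PosSemidef)
    (hsum : ∀ i j, Summable fun n => A n i j) :
    (of fun i j => ∑' n, A n i j).PosSemidef := by
  refine ⟨?_, fun v => ?_⟩
  · ext i j
    exact tsum_congr fun n => by simpa using congr_fun₂ (hA n).1 i j
  have hterm : ∀ i j a b, Summable fun n => a * A n i j * b :=
    fun i j a b => ((hsum i j).mul_left a).mul_right b
  have hform :
      (v.sum fun i a => v.sum fun j b => star a * of (fun i j => ∑' n, A n i j) i j * b) =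
        ∑' n, v.sum fun i a => v.sum fun j b => star a * A n i j * b := by
    simp only [Finsupp.sum, of_apply, star_trivial]
    rw [Summable.tsum_finsetSum fun i _ => summable_sum fun j _ => hterm _ _ _ _]
    refine Finset.sum_congr rfl fun i _ => ?_
    rw [Summable.tsum_finsetSum fun j _ => hterm _ _ _ _]
    refine Finset.sum_congr rfl fun j _ => ?_
    rw [tsum_mul_right, tsum_mul_left]
  rw [hform]
  exact tsum_nonneg fun n => (hA n).2 v

variable [Fintype ι]

open scoped ComplexOrder in
theorem PosSemidef.map_pow {𝕜 : Type*} [RCLike 𝕜] {A : Matrix ι ι 𝕜} (hA : A.PosSemidef)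
    (n : ℕ) : (A.map (· ^ n)).PosSemidef := by
  induction n with
  | zero =>
    convert posSemidef_vecMulVec_self_star (1 : ι → 𝕜)
    ext; simp
  | succ n ih =>
    convert ih.hadamard hA
    ext; simp [pow_succ]

theorem PosSemidef.map_exp {A : Matrix ι ι ℝ} (hA : A.PosSemidef) : (A.map exp).PosSemidef := by
  have hseries :
      A.map exp = of fun i j => ∑' n, ((n.factorial : ℝ)⁻¹ • A.map (· ^ n)) i j := by
    ext i j
    simp [exp_eq_exp_ℝ, NormedSpace.exp_eq_tsum_div, div_eq_inv_mul]
  rw [hseries]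
  refine posSemidef_of_tsum (fun n => (hA.map_pow n).smul (by positivity)) fun i j => ?_
  simpa [div_eq_inv_mul] using summable_pow_div_factorial (A i j)

variable {E : Type*} [NormedAddCommGroup E] [InnerProductSpace ℝ E]

theorem posSemidef_exp_neg_mul_norm_sub_sq (x : ι → E) {b : ℝ} (hb : 0 ≤ b) :
    (of fun i j => exp (-(b * ‖x i - x j‖ ^ 2))).PosSemidef := by
  classical
  set D : Matrix ι ι ℝ := diagonal fun i => exp (-(b * ‖x i‖ ^ 2))
  have hfactor : of (fun i j => exp (-(b * ‖x i - x j‖ ^ 2))) =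
      Dᴴ * ((2 * b) • gram ℝ x).map exp * D := by
    ext i j
    simp only [D, of_apply, diagonal_conjTranspose, diagonal_mul, mul_diagonal, map_apply,
      smul_apply, gram_apply, norm_sub_sq_real, ← exp_add, star_trivial, smul_eq_mul]
    ring_nf
  rw [hfactor]
  exact ((posSemidef_gram ℝ x).smul (by positivity)).map_exp.conjTranspose_mul_mul_same D

theorem posSemidef_exp_neg_norm_sub (x : ι → E) :
    (of fun i j => exp (-‖x i - x j‖)).PosSemidef := by
  set G : ℝ → Matrix ι ι ℝ := fun s =>
    exp (-s ^ 2) • of fun i j => exp (-((4 * s ^ 2)⁻¹ * ‖x i - x j‖ ^ 2))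
  have hmixture : of (fun i j => exp (-‖x i - x j‖)) =
      (2 / √π) • of fun i j => ∫ s in Ioi 0, G s i j := by
    ext i j
    simp only [G, of_apply, smul_apply, smul_eq_mul,
      integral_Ioi_exp_neg_sq_mul_exp_neg_inv_mul (norm_nonneg (x i - x j))]
    field_simp
  rw [hmixture]
  refine (posSemidef_of_integral ?_ fun i j => ?_).smul (by positivity)
  · filter_upwards [ae_restrict_mem measurableSet_Ioi] with s hs
    exact (posSemidef_exp_neg_mul_norm_sub_sq x (by positivity)).smul (exp_pos _).le
  · exact integrable_exp_neg_sq_mul_exp_neg_inv_mul.integrableOn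

end Matrix

/-- For any points `x 1, …, x N` in `ℝ^d` and any `σ > 0`, the `N × N` matrix `K`
with entries `K i j = exp (-‖x i - x j‖ / σ)`, where `‖·‖` is the Euclidean norm
on `ℝ^d` (modelled by `EuclideanSpace ℝ (Fin d)`), is symmetric positive
semidefinite.  (`Matrix.PosSemidef` bundles symmetry (hermitianity, i.e. symmetry
over `ℝ`) together with `0 ≤ vᵀ K v` for all `v`.) -/
theorem exp_kernel_matrix_posSemidef (N d : ℕ) (x : Fin N → EuclideanSpace ℝ (Fin d))
    (σ : ℝ) (hσ : 0 < σ) :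
    (Matrix.of fun i j : Fin N => Real.exp (-(‖x i - x j‖ / σ))).PosSemidef := by
  convert Matrix.posSemidef_exp_neg_norm_sub fun i => σ⁻¹ • x i using 4 with i j
  rw [← smul_sub, norm_smul, norm_inv, norm_of_nonneg hσ.le, inv_mul_eq_div]
end
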